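/- Let 1 ≤ K ≤ N and for i ∈ {1,…,K} let Λ_i = diag(e^{j2πn(i−1)/N})_{n=0}^{N−1}. Let Δx ∈ ℂ^N be such that (Δx)_k ≠ 0 for all k ∈ {1,…,N}. Then the N×K matrix Φ(Δx) = [Λ_1Δx Λ_2Δx ⋯ Λ_KΔx] has rank K. -/

import Mathlib

/-
Writing `ζ = e^{2πj/N}`, the `(n, i)` entry of `Φ(Δx)` is `(ζ^n)^i · (Δx)_n`, so
`Φ(Δx) = diag(Δx) · V` with `V` the `N × K` Vandermonde matrix on the nodes `1, ζ, …, ζ^{N-1}`.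
Since `Δx` has no zero entry, `diag(Δx)` is invertible and `rank Φ(Δx) = rank V`. The first `K` rows
of `V` form a square Vandermonde matrix on the distinct nodes `1, ζ, …, ζ^{K-1}` (as `K ≤ N` and `ζ`
is a primitive `N`-th root of unity), so its determinant is nonzero and `rank V ≥ K`.
-/

open Matrix

/-- The diagonal matrix `Λ_i = diag(e^{j 2π n (i-1)/N})_{n=0}^{N-1}`. -/
noncomputable def phaseMatrix (N i : ℕ) : Matrix (Fin N) (Fin N) ℂ :=
  Matrix.diagonal fun n =>
    Complex.exp (2 * Real.pi * Complex.I * (n : ℕ) * ((i - 1 : ℕ) : ℂ) / N)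

namespace Matrix

variable {R ι : Type*} [CommRing R] [IsDomain R]

theorem rank_diagonal_mul_of_ne_zero {κ : Type*} [Fintype ι] [DecidableEq ι] [Fintype κ]
    (d : ι → R) (hd : ∀ n, d n ≠ 0) (B : Matrix ι κ R) : (diagonal d * B).rank = B.rank :=
  rank_mul_eq_right_of_det_ne_zero _ B <| by
    simpa only [det_diagonal, Finset.prod_ne_zero_iff] using fun n _ => hd n

theorem rank_of_pow_eq_of_injective_comp {K : ℕ} (x : ι → R) (e : Fin K → ι)
    (he : Function.Injective (x ∘ e)) : (of fun n (i : Fin K) => x n ^ (i : ℕ)).rank = K := by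
  refine le_antisymm ((rank_le_card_width _).trans_eq (Fintype.card_fin K)) ?_
  have hsub : (of fun n (i : Fin K) => x n ^ (i : ℕ)).submatrix e id = vandermonde (x ∘ e) := by
    ext; simp [vandermonde_apply]
  calc K = (vandermonde (x ∘ e)).rank := by
        rw [rank_of_det_ne_zero (det_vandermonde_ne_zero_iff.mpr he), Fintype.card_fin]
    _ ≤ _ := hsub ▸ rank_submatrix_le _ _ _

end Matrix

theorem IsPrimitiveRoot.pow_castLE_injective {M : Type*} [CommMonoid M] {ζ : M} {K N : ℕ}
    (hζ : IsPrimitiveRoot ζ N) (hKN : K ≤ N) :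
    Function.Injective fun m : Fin K => ζ ^ (Fin.castLE hKN m : ℕ) :=
  fun a b hab => Fin.ext (hζ.pow_inj (a.2.trans_le hKN) (b.2.trans_le hKN) hab)

theorem phaseMatrix_succ_mulVec_apply (N i : ℕ) (v : Fin N → ℂ) (n : Fin N) :
    (phaseMatrix N (i + 1) *ᵥ v) n =
      (Complex.exp (2 * Real.pi * Complex.I / N) ^ (n : ℕ)) ^ i * v n := by
  rw [phaseMatrix, mulVec_diagonal, ← pow_mul, ← Complex.exp_nat_mul, Nat.add_sub_cancel]
  push_cast
  ring_nf

theorem stmt5_general (N K : ℕ) (hKN : K ≤ N) (Δx : Fin N → ℂ)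
    (hΔx : ∀ k : Fin N, Δx k ≠ 0) :
    (Matrix.of fun (n : Fin N) (i : Fin K) =>
        (phaseMatrix N ((i : ℕ) + 1) *ᵥ Δx) n).rank = K := by
  set ζ := Complex.exp (2 * Real.pi * Complex.I / N)
  have hΦ : (Matrix.of fun (n : Fin N) (i : Fin K) => (phaseMatrix N ((i : ℕ) + 1) *ᵥ Δx) n) =
      diagonal Δx * of fun (n : Fin N) (i : Fin K) => (ζ ^ (n : ℕ)) ^ (i : ℕ) := by
    ext n i
    simp [phaseMatrix_succ_mulVec_apply, ζ, mul_comm]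
  rw [hΦ, rank_diagonal_mul_of_ne_zero Δx hΔx]
  refine rank_of_pow_eq_of_injective_comp _ (Fin.castLE hKN) ?_
  rcases Nat.eq_zero_or_pos N with rfl | hN
  · obtain rfl : K = 0 := Nat.le_zero.mp hKN
    exact Function.injective_of_subsingleton _
  · exact (Complex.isPrimitiveRoot_exp N hN.ne').pow_castLE_injective hKN

theorem stmt5 (N K : ℕ) (hK : 1 ≤ K) (hKN : K ≤ N) (Δx : Fin N → ℂ)
    (hΔx : ∀ k : Fin N, Δx k ≠ 0) :
    (Matrix.of fun (n : Fin N) (i : Fin K) =>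
        (phaseMatrix N ((i : ℕ) + 1) *ᵥ Δx) n).rank = K :=
  stmt5_general N K hKN Δx hΔx
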